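/- arXiv:1801.09532 — 9 statements merged into one kernel-verified Lean document; each statement's English description precedes it below -/
import Mathlib

section
/- Let A and B both be phased coproducts of a family of objects (A_i)_{i∈I} in a category, with coprojections κ_i : A_i → A and μ_i : A_i → B respectively. Then any morphism f : A → B satisfying f ∘ κ_i = μ_i for all i ∈ I is an isomorphism. -/
/-!
If `f ≫ g` preserves the coprojections of a phased coproduct, it is a phase. A phase `U` has a
left inverse `V` that is again a phase (compare `U` with `𝟙` using axiom (ii)), and `V` in turn
has a left inverse; so `V` is invertible and `U = V⁻¹`. For `f : P ⟶ Q` as in the theorem and a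
lift `g : Q ⟶ P` of the coprojections of `P`, both `f ≫ g` and `g ≫ f` are phases, hence
isomorphisms, which makes `f` split mono and split epi.
-/

open CategoryTheory CategoryTheory.Limits

universe v u

variable {C : Type u} [Category.{v} C]

/-- Phased coproduct of a family of objects: (i) every cocone factors through `P`;
(ii) any two factorizations differ by a *phase*, i.e. an endomorphism of `P`
preserving all the coprojections. -/
structure IsPhasedCoproduct {ι : Type*} (A : ι → C) (P : C) (κ : ∀ i, A i ⟶ P) : Prop where
  lift : ∀ {D : C} (f : ∀ i, A i ⟶ D), ∃ h : P ⟶ D, ∀ i, κ i ≫ h = f i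
  phase : ∀ {D : C} (h h' : P ⟶ D), (∀ i, κ i ≫ h = κ i ≫ h') →
    ∃ U : P ⟶ P, (∀ i, κ i ≫ U = κ i) ∧ h' = U ≫ h

theorem CategoryTheory.isIso_of_isIso_comp_of_isIso_comp {X Y : C} (f : X ⟶ Y) (g : Y ⟶ X)
    [IsIso (f ≫ g)] [IsIso (g ≫ f)] : IsIso f := by
  have : Mono f := mono_of_mono f g
  have : IsSplitEpi f := IsSplitEpi.mk' ⟨inv (g ≫ f) ≫ g, by simp⟩
  exact isIso_of_mono_of_isSplitEpi f

namespace IsPhasedCoproduct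

variable {ι : Type*} {A : ι → C} {P : C}

def IsPhase (κ : ∀ i, A i ⟶ P) (U : P ⟶ P) : Prop :=
  ∀ i, κ i ≫ U = κ i

variable {κ : ∀ i, A i ⟶ P}

theorem exists_isPhase_comp_eq_id (hP : IsPhasedCoproduct A P κ) {U : P ⟶ P}
    (hU : IsPhase κ U) : ∃ V, IsPhase κ V ∧ V ≫ U = 𝟙 P := by
  obtain ⟨V, hV, hVU⟩ := hP.phase U (𝟙 P) fun i => by rw [hU i, Category.comp_id]
  exact ⟨V, hV, hVU.symm⟩

theorem isIso_of_isPhase (hP : IsPhasedCoproduct A P κ) {U : P ⟶ P} (hU : IsPhase κ U) :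
    IsIso U := by
  obtain ⟨V, hV, hVU⟩ := hP.exists_isPhase_comp_eq_id hU
  obtain ⟨W, -, hWV⟩ := hP.exists_isPhase_comp_eq_id hV
  have : IsSplitMono V := IsSplitMono.mk' ⟨U, hVU⟩
  have : IsSplitEpi V := IsSplitEpi.mk' ⟨W, hWV⟩
  have : IsIso V := isIso_of_mono_of_isSplitEpi V
  exact isIso_of_hom_comp_eq_id V hVU

end IsPhasedCoproduct

/-- a morphism between two phased coproducts of the same family that
commutes with the coprojections is an isomorphism. -/
theorem stmt_0 {ι : Type*} (A : ι → C) (P Q : C) (κ : ∀ i, A i ⟶ P) (μ : ∀ i, A i ⟶ Q)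
    (hP : IsPhasedCoproduct A P κ) (hQ : IsPhasedCoproduct A Q μ)
    (f : P ⟶ Q) (hf : ∀ i, κ i ≫ f = μ i) : IsIso f := by
  obtain ⟨g, hg⟩ := hQ.lift κ
  have : IsIso (f ≫ g) := hP.isIso_of_isPhase fun i => by rw [reassoc_of% (hf i), hg]
  have : IsIso (g ≫ f) := hQ.isIso_of_isPhase fun i => by rw [reassoc_of% (hg i), hf]
  exact isIso_of_isIso_comp_of_isIso_comp f g
end

section
/- Let P, with coprojections κ_i : A_i → P, be a phased coproduct of a family of objects (A_i)_{i∈I} in a category. Then every phase of P, i.e. every endomorphism U : P → P with U ∘ κ_i = κ_i for all i, is an isomorphism. -/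
open CategoryTheory CategoryTheory.Limits

universe v u

variable {C : Type u} [Category.{v} C]

/-!
Axiom (ii), applied to the pair `U, 𝟙 P` (which agree on the coprojections when `U` is a phase),
gives a phase `V` with `V ≫ U = 𝟙 P`. Applying this once more to `V` shows that `V` is split both
ways, hence an isomorphism, and then so is its one-sided inverse `U`.
-/

namespace IsPhasedCoproduct

variable {ι : Type*} {A : ι → C} {P : C} {κ : ∀ i, A i ⟶ P}

theorem exists_phase_comp_eq_id (hP : IsPhasedCoproduct A P κ) {U : P ⟶ P}
    (hU : ∀ i, κ i ≫ U = κ i) : ∃ V : P ⟶ P, (∀ i, κ i ≫ V = κ i) ∧ V ≫ U = 𝟙 P := by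
  obtain ⟨V, hV, hVU⟩ := hP.phase U (𝟙 P) fun i => by rw [hU, Category.comp_id]
  exact ⟨V, hV, hVU.symm⟩

end IsPhasedCoproduct

/-- every phase of a phased coproduct is an isomorphism. -/
theorem stmt_2 {ι : Type*} (A : ι → C) (P : C) (κ : ∀ i, A i ⟶ P)
    (hP : IsPhasedCoproduct A P κ) (U : P ⟶ P) (hU : ∀ i, κ i ≫ U = κ i) :
    IsIso U := by
  obtain ⟨V, hV, hVU⟩ := hP.exists_phase_comp_eq_id hU
  obtain ⟨W, -, hWV⟩ := hP.exists_phase_comp_eq_id hV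
  have : IsSplitMono V := .mk' ⟨U, hVU⟩
  have : IsSplitEpi V := .mk' ⟨W, hWV⟩
  have : IsIso V := isIso_of_mono_of_isSplitEpi V
  exact isIso_of_hom_comp_eq_id V hVU
end

section
/- Let C be a category in which every pair of objects has a phased coproduct. Then any phased initial object of C is an initial object. -/
/-!
Let `κ₁ κ₂ : Z ⟶ Z +̇ Z` be the coprojections and `κ₂ = V ≫ κ₁` the phase relating them. For
`f g : Z ⟶ A`, lifting the pair `(f, g)` to `h` gives `g = κ₂ ≫ h = V ≫ κ₁ ≫ h = V ≫ f`.
With `g = f` this says `V ≫ f = f`, so any two morphisms out of `Z` coincide.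
-/

open CategoryTheory CategoryTheory.Limits

universe v u

variable {C : Type u} [Category.{v} C]

structure IsPhasedCoproduct₂ (A B P : C) (κA : A ⟶ P) (κB : B ⟶ P) : Prop where
  lift : ∀ {D : C} (f : A ⟶ D) (g : B ⟶ D), ∃ h : P ⟶ D, κA ≫ h = f ∧ κB ≫ h = g
  phase : ∀ {D : C} (h h' : P ⟶ D), κA ≫ h = κA ≫ h' → κB ≫ h = κB ≫ h' →
    ∃ U : P ⟶ P, (κA ≫ U = κA ∧ κB ≫ U = κB) ∧ h' = U ≫ h

structure IsPhasedInitial (Z : C) : Prop where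
  exists_hom : ∀ A : C, Nonempty (Z ⟶ A)
  phase : ∀ {A : C} (a b : Z ⟶ A), ∃ U : Z ⟶ Z, b = U ≫ a

def HasPhasedCoproducts₂ (C : Type u) [Category.{v} C] : Prop :=
  ∀ A B : C, ∃ (P : C) (κA : A ⟶ P) (κB : B ⟶ P), IsPhasedCoproduct₂ A B P κA κB

theorem IsPhasedCoproduct₂.eq_comp_of_inr_eq {A B P : C} {κA : A ⟶ P} {κB : B ⟶ P}
    (hP : IsPhasedCoproduct₂ A B P κA κB) {u : B ⟶ A} (hu : κB = u ≫ κA) {D : C}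
    (f : A ⟶ D) (g : B ⟶ D) : g = u ≫ f := by
  obtain ⟨h, hA, hB⟩ := hP.lift f g
  rw [← hA, ← hB, hu, Category.assoc]

theorem IsPhasedInitial.hom_ext {Z P : C} (hZ : IsPhasedInitial Z) {κ₁ κ₂ : Z ⟶ P}
    (hP : IsPhasedCoproduct₂ Z Z P κ₁ κ₂) {A : C} (f g : Z ⟶ A) : f = g := by
  obtain ⟨V, hV⟩ := hZ.phase κ₁ κ₂
  calc f = V ≫ f := hP.eq_comp_of_inr_eq hV f f
    _ = g := (hP.eq_comp_of_inr_eq hV f g).symm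

/-- in a category with binary phased coproducts, any phased initial
object is an initial object. -/
theorem stmt_3 (hC : HasPhasedCoproducts₂ C) (Z : C) (hZ : IsPhasedInitial Z) :
    Nonempty (IsInitial Z) := by
  obtain ⟨P, κ₁, κ₂, hP⟩ := hC Z Z
  exact ⟨IsInitial.ofUniqueHom (fun A => (hZ.exists_hom A).some)
    fun _ _ => hZ.hom_ext hP _ _⟩
end

section
/- Let C be a category in which every pair of objects has a phased coproduct, let 0 be a phased initial object of C, and let A +̇ 0 be a phased coproduct of an object A with 0. Then the coprojection κ_A : A → A +̇ 0 is an isomorphism. -/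
open CategoryTheory CategoryTheory.Limits

universe v u

variable {C : Type u} [Category.{v} C]

theorem IsPhasedInitial.exists_comp_eq {Z : C} (hZ : IsPhasedInitial Z) {X Y : C} (f : X ⟶ Y)
    (b : Z ⟶ Y) : ∃ g : Z ⟶ X, g ≫ f = b := by
  obtain ⟨z⟩ := hZ.exists_hom X
  obtain ⟨U, hU⟩ := hZ.phase (z ≫ f) b
  exact ⟨U ≫ z, by rw [hU, Category.assoc]⟩

namespace IsPhasedCoproduct₂

variable {A B P : C} {κA : A ⟶ P} {κB : B ⟶ P}

/-- A retraction `r` of `κA` is a two-sided inverse up to a phase: `r ≫ κA` agrees with `𝟙 P`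
on both coprojections, so `𝟙 P = U ≫ r ≫ κA` for a phase `U`, and `U ≫ r` inverts `κA`. -/
theorem isIso_of_retraction (hP : IsPhasedCoproduct₂ A B P κA κB) (r : P ⟶ A)
    (hr : κA ≫ r = 𝟙 A) (hrB : κB ≫ r ≫ κA = κB) : IsIso κA := by
  have hrA : κA ≫ r ≫ κA = κA ≫ 𝟙 P := by rw [reassoc_of% hr, Category.comp_id]
  obtain ⟨U, ⟨hUA, -⟩, hU⟩ := hP.phase (r ≫ κA) (𝟙 P) hrA (by rw [hrB, Category.comp_id])
  refine ⟨⟨U ≫ r, ?_, ?_⟩⟩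
  · rw [reassoc_of% hUA, hr]
  · rw [Category.assoc, ← hU]

end IsPhasedCoproduct₂

theorem stmt_4_general (Z : C) (hZ : IsPhasedInitial Z)
    (A P : C) (κA : A ⟶ P) (κZ : Z ⟶ P) (hP : IsPhasedCoproduct₂ A Z P κA κZ) :
    IsIso κA := by
  obtain ⟨g, hg⟩ := hZ.exists_comp_eq κA κZ
  obtain ⟨r, hrA, hrZ⟩ := hP.lift (𝟙 A) g
  exact hP.isIso_of_retraction r hrA (by rw [reassoc_of% hrZ, hg])

/-- in a category with binary phased coproducts and a phased initial
object `Z`, the coprojection `A ⟶ A +̇ Z` is an isomorphism. -/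
theorem stmt_4 (hC : HasPhasedCoproducts₂ C) (Z : C) (hZ : IsPhasedInitial Z)
    (A P : C) (κA : A ⟶ P) (κZ : Z ⟶ P) (hP : IsPhasedCoproduct₂ A Z P κA κZ) :
    IsIso κA :=
  stmt_4_general Z hZ A P κA κZ hP
end

section
/- Let A +̇ B be a phased coproduct of A and B with coprojections κ_A, κ_B, and let (A +̇ B) +̇ C be a phased coproduct of A +̇ B and C with coprojections κ_{A+̇B}, κ_C. Then (A +̇ B) +̇ C is a phased coproduct of the three objects A, B, C with coprojections κ_{A+̇B} ∘ κ_A, κ_{A+̇B} ∘ κ_B and κ_C. -/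
open CategoryTheory CategoryTheory.Limits

universe v u

variable {C : Type u} [Category.{v} C]

/-- Ternary phased coproduct. -/
structure IsPhasedCoproduct₃ (A B C' P : C) (κA : A ⟶ P) (κB : B ⟶ P) (κC : C' ⟶ P) : Prop where
  lift : ∀ {D : C} (f : A ⟶ D) (g : B ⟶ D) (k : C' ⟶ D),
    ∃ h : P ⟶ D, κA ≫ h = f ∧ κB ≫ h = g ∧ κC ≫ h = k
  phase : ∀ {D : C} (h h' : P ⟶ D), κA ≫ h = κA ≫ h' → κB ≫ h = κB ≫ h' →
      κC ≫ h = κC ≫ h' →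
    ∃ U : P ⟶ P, (κA ≫ U = κA ∧ κB ≫ U = κB ∧ κC ≫ U = κC) ∧ h' = U ≫ h

namespace IsPhasedCoproduct₂

variable {A B C' P Q : C} {κA : A ⟶ P} {κB : B ⟶ P} {κP : P ⟶ Q} {κC : C' ⟶ Q}

theorem exists_lift_assoc (hP : IsPhasedCoproduct₂ A B P κA κB)
    (hQ : IsPhasedCoproduct₂ P C' Q κP κC) {D : C} (f : A ⟶ D) (g : B ⟶ D) (k : C' ⟶ D) :
    ∃ h : Q ⟶ D, (κA ≫ κP) ≫ h = f ∧ (κB ≫ κP) ≫ h = g ∧ κC ≫ h = k := by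
  obtain ⟨hAB, hA, hB⟩ := hP.lift f g
  obtain ⟨h, hP', hC⟩ := hQ.lift hAB k
  exact ⟨h, by rw [Category.assoc, hP', hA], by rw [Category.assoc, hP', hB], hC⟩

/- A phase `U` of `P` relating `κP ≫ h` and `κP ≫ h'` extends, via the lift of `(U ≫ κP, κC)`,
to an endomorphism `W` of `Q`; a phase `V` of `Q` then relates `W ≫ h` and `h'`, and `V ≫ W`
fixes all three coprojections. -/
theorem exists_phase_assoc (hP : IsPhasedCoproduct₂ A B P κA κB)
    (hQ : IsPhasedCoproduct₂ P C' Q κP κC) {D : C} (h h' : Q ⟶ D)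
    (hA : (κA ≫ κP) ≫ h = (κA ≫ κP) ≫ h') (hB : (κB ≫ κP) ≫ h = (κB ≫ κP) ≫ h')
    (hC : κC ≫ h = κC ≫ h') :
    ∃ U : Q ⟶ Q, ((κA ≫ κP) ≫ U = κA ≫ κP ∧ (κB ≫ κP) ≫ U = κB ≫ κP ∧ κC ≫ U = κC) ∧
      h' = U ≫ h := by
  simp only [Category.assoc] at hA hB
  obtain ⟨U, ⟨hUA, hUB⟩, hU⟩ := hP.phase (κP ≫ h) (κP ≫ h') hA hB
  obtain ⟨W, hWP, hWC⟩ := hQ.lift (U ≫ κP) κC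
  obtain ⟨V, ⟨hVP, hVC⟩, hV⟩ := hQ.phase (W ≫ h) h'
    (by rw [← Category.assoc, hWP, Category.assoc, ← hU])
    (by rw [← Category.assoc, hWC, hC])
  have hVW : κP ≫ V ≫ W = U ≫ κP := by rw [← Category.assoc, hVP, hWP]
  refine ⟨V ≫ W, ⟨?_, ?_, ?_⟩, by rw [hV, Category.assoc]⟩
  · rw [Category.assoc, hVW, ← Category.assoc, hUA]
  · rw [Category.assoc, hVW, ← Category.assoc, hUB]
  · rw [← Category.assoc, hVC, hWC]

end IsPhasedCoproduct₂

/-- associativity of phased coproducts: `(A +̇ B) +̇ C` is a phased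
coproduct of `A`, `B`, `C`. -/
theorem stmt_5 (A B C' P Q : C) (κA : A ⟶ P) (κB : B ⟶ P)
    (hP : IsPhasedCoproduct₂ A B P κA κB)
    (κP : P ⟶ Q) (κC : C' ⟶ Q) (hQ : IsPhasedCoproduct₂ P C' Q κP κC) :
    IsPhasedCoproduct₃ A B C' Q (κA ≫ κP) (κB ≫ κP) κC :=
  ⟨hP.exists_lift_assoc hQ, hP.exists_phase_assoc hQ⟩
end

section
/- If a category has an initial object and a phased coproduct of every pair of objects, then every finite family of objects (A_1, …, A_n) has a phased coproduct. -/
/-!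
Induct on `n`. The initial object is a phased coproduct of the empty family, and if `P` is a
phased coproduct of `A₀, …, Aₙ₋₁` then `P +̇ Aₙ` is one of `A₀, …, Aₙ`. Factorizations compose
directly. For phases, two maps `h, h'` out of `P +̇ Aₙ` that agree on every coprojection restrict
to maps out of `P` differing by a phase `V` of `P`; composing with `W = V +̇ 𝟙` (any lift of
`V ≫ κ_P` and `κ_{Aₙ}`) turns `h` into a map agreeing with `h'` on `κ_P` and `κ_{Aₙ}`, so the
binary phase property supplies `U` with `h' = U ≫ W ≫ h`, and `U ≫ W` is the required phase.
-/

open CategoryTheory CategoryTheory.Limits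

universe v u

variable {C : Type u} [Category.{v} C]

namespace IsPhasedCoproduct

theorem of_isInitial {ι : Type*} [IsEmpty ι] (A : ι → C) {Z : C} (hZ : IsInitial Z) :
    IsPhasedCoproduct A Z (fun i => isEmptyElim i) where
  lift f := ⟨hZ.to _, isEmptyElim⟩
  phase h h' _ := ⟨𝟙 Z, isEmptyElim, by simp [hZ.hom_ext h h']⟩

variable {n : ℕ} {A : Fin (n + 1) → C} {P Q : C} {κ : ∀ i : Fin n, A i.castSucc ⟶ P}
  {κP : P ⟶ Q} {κA : A (Fin.last n) ⟶ Q}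

theorem lastCases (hP : IsPhasedCoproduct (fun i : Fin n => A i.castSucc) P κ)
    (hQ : IsPhasedCoproduct₂ P (A (Fin.last n)) Q κP κA) :
    IsPhasedCoproduct A Q (Fin.lastCases (motive := fun i => A i ⟶ Q) κA fun j => κ j ≫ κP) where
  lift f := by
    obtain ⟨h, hh⟩ := hP.lift fun j => f j.castSucc
    obtain ⟨g, hgP, hgA⟩ := hQ.lift h (f (Fin.last n))
    refine ⟨g, Fin.forall_fin_succ'.2 ⟨fun j => ?_, by simpa using hgA⟩⟩
    rw [Fin.lastCases_castSucc, Category.assoc, hgP, hh]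
  phase h h' hhh := by
    simp only [Fin.forall_fin_succ', Fin.lastCases_castSucc, Fin.lastCases_last,
      Category.assoc] at hhh
    obtain ⟨hhP, hhA⟩ := hhh
    obtain ⟨V, hVκ, hV⟩ := hP.phase (κP ≫ h) (κP ≫ h') hhP
    obtain ⟨W, hWP, hWA⟩ := hQ.lift (V ≫ κP) κA
    have hWhP : κP ≫ W ≫ h = κP ≫ h' := by
      rw [← Category.assoc, hWP, Category.assoc, ← hV]
    have hWhA : κA ≫ W ≫ h = κA ≫ h' := by
      rw [← Category.assoc, hWA, hhA]
    obtain ⟨U, ⟨hUP, hUA⟩, hU⟩ := hQ.phase (W ≫ h) h' hWhP hWhA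
    refine ⟨U ≫ W, Fin.forall_fin_succ'.2 ⟨fun j => ?_, ?_⟩, by rw [hU, Category.assoc]⟩
    · rw [Fin.lastCases_castSucc, Category.assoc, ← Category.assoc κP, hUP, hWP,
        ← Category.assoc, hVκ]
    · rw [Fin.lastCases_last, ← Category.assoc, hUA, hWA]

end IsPhasedCoproduct

/-- a category with an initial object and binary phased coproducts has
phased coproducts of all finite families of objects. -/
theorem stmt_6 [HasInitial C] (hC : HasPhasedCoproducts₂ C) (n : ℕ) (A : Fin n → C) :
    ∃ (P : C) (κ : ∀ i, A i ⟶ P), IsPhasedCoproduct A P κ := by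
  induction n with
  | zero => exact ⟨⊥_ C, _, .of_isInitial A initialIsInitial⟩
  | succ n ih =>
    obtain ⟨P, κ, hP⟩ := ih fun i => A i.castSucc
    obtain ⟨Q, κP, κA, hQ⟩ := hC P (A (Fin.last n))
    exact ⟨Q, _, hP.lastCases hQ⟩
end

section
/- Let C be a category with finite coproducts and a choice of trivial isomorphisms, with induced congruence ∼ and quotient functor [−] : C → C/∼. Then C/∼ has finite phased coproducts: any initial object of C is initial in C/∼, and for any coproduct A + B in C with coprojections κ_A, κ_B, the object A + B together with [κ_A], [κ_B] is a phased coproduct of A and B in C/∼. -/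
/-!
Every morphism of `C/∼` lifts to `C`, so copairings in `C` give the factorizations through
`A + B`, and initiality passes to the quotient. If `h, h' : A + B → D` agree in `C/∼` on both
summands, then `h' ∘ κ_A = h ∘ κ_A ∘ p` and `h' ∘ κ_B = h ∘ κ_B ∘ q` for trivial `p, q`; the
copairing `U = [κ_A ∘ p, κ_B ∘ q]` then satisfies `h' = h ∘ U` by uniqueness of copairings, while
`[U]` fixes both coprojections in `C/∼`.
-/

open CategoryTheory CategoryTheory.Limits

universe v u

variable {C : Type u} [Category.{v} C]

/-- Binary (actual) coproduct, phrased elementarily. -/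
def IsCoproduct₂ (A B P : C) (κA : A ⟶ P) (κB : B ⟶ P) : Prop :=
  ∀ {D : C} (f : A ⟶ D) (g : B ⟶ D), ∃! h : P ⟶ D, κA ≫ h = f ∧ κB ≫ h = g

/-- A choice of trivial isomorphisms: a subgroup of automorphisms at each object,
such that every morphism `f : A ⟶ B` intertwines trivial isomorphisms on `B` with
trivial isomorphisms on `A`. -/
def IsTrivialIsos (T : ∀ A : C, Subgroup (Aut A)) : Prop :=
  ∀ {A B : C} (f : A ⟶ B), ∀ p ∈ T B, ∃ q ∈ T A, f ≫ p.hom = q.hom ≫ f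

/-- The congruence induced by a choice of trivial isomorphisms:
`f ∼ g` iff `f = g ∘ q` for some trivial `q`. -/
def trivRel (T : ∀ A : C, Subgroup (Aut A)) : HomRel C :=
  fun {A _} f g => ∃ q ∈ T A, f = q.hom ≫ g

theorem IsTrivialIsos.congruence {T : ∀ A : C, Subgroup (Aut A)} (hT : IsTrivialIsos T) :
    Congruence (trivRel T) where
  equivalence :=
    { refl := fun f => ⟨1, one_mem _, (Category.id_comp f).symm⟩
      symm := by
        rintro f g ⟨q, hq, rfl⟩
        exact ⟨q⁻¹, inv_mem hq, (q.inv_hom_id_assoc _).symm⟩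
      trans := by
        rintro f g h ⟨q, hq, rfl⟩ ⟨p, hp, rfl⟩
        exact ⟨p * q, mul_mem hp hq, (Category.assoc _ _ _).symm⟩ }
  comp_left := by
    rintro X Y Z f g g' ⟨q, hq, rfl⟩
    obtain ⟨p, hp, hfp⟩ := hT f q hq
    exact ⟨p, hp, by rw [← Category.assoc, hfp, Category.assoc]⟩
  comp_right := by
    rintro X Y Z f f' g ⟨q, hq, rfl⟩
    exact ⟨q, hq, Category.assoc _ _ _⟩

theorem IsCoproduct₂.hom_ext {A B P D : C} {κA : A ⟶ P} {κB : B ⟶ P}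
    (hc : IsCoproduct₂ A B P κA κB) {h h' : P ⟶ D} (hA : κA ≫ h = κA ≫ h')
    (hB : κB ≫ h = κB ≫ h') : h = h' :=
  (hc (κA ≫ h') (κB ≫ h')).unique ⟨hA, hB⟩ ⟨rfl, rfl⟩

theorem IsCoproduct₂.exists_trivRel_phase {T : ∀ A : C, Subgroup (Aut A)} {A B P D : C}
    {κA : A ⟶ P} {κB : B ⟶ P} (hc : IsCoproduct₂ A B P κA κB) {h h' : P ⟶ D}
    (hA : trivRel T (κA ≫ h') (κA ≫ h)) (hB : trivRel T (κB ≫ h') (κB ≫ h)) :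
    ∃ U : P ⟶ P, (trivRel T (κA ≫ U) κA ∧ trivRel T (κB ≫ U) κB) ∧ h' = U ≫ h := by
  obtain ⟨p, hp, hpA⟩ := hA
  obtain ⟨q, hq, hqB⟩ := hB
  obtain ⟨U, ⟨hUA, hUB⟩, -⟩ := hc (p.hom ≫ κA) (q.hom ≫ κB)
  refine ⟨U, ⟨⟨p, hp, hUA⟩, ⟨q, hq, hUB⟩⟩, hc.hom_ext ?_ ?_⟩
  · rw [hpA, reassoc_of% hUA]
  · rw [hqB, reassoc_of% hUB]

namespace CategoryTheory.Quotient

def isInitialFunctorObj (r : HomRel C) {Z : C} (hZ : IsInitial Z) :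
    IsInitial ((functor r).obj Z) :=
  IsInitial.ofUniqueHom (fun Y => (functor r).map (hZ.to Y.as)) fun Y m => by
    obtain ⟨f, rfl⟩ := (functor r).map_surjective (show _ ⟶ (functor r).obj Y.as from m)
    exact congrArg _ (hZ.hom_ext f _)

end CategoryTheory.Quotient

theorem IsCoproduct₂.isPhasedCoproduct₂_quotientFunctorMap {T : ∀ A : C, Subgroup (Aut A)}
    (hT : IsTrivialIsos T) {A B P : C} {κA : A ⟶ P} {κB : B ⟶ P}
    (hc : IsCoproduct₂ A B P κA κB) :
    IsPhasedCoproduct₂ ((Quotient.functor (trivRel T)).obj A)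
      ((Quotient.functor (trivRel T)).obj B) ((Quotient.functor (trivRel T)).obj P)
      ((Quotient.functor (trivRel T)).map κA) ((Quotient.functor (trivRel T)).map κB) := by
  have := hT.congruence
  set F := Quotient.functor (trivRel T)
  constructor
  · intro D f g
    obtain ⟨f, rfl⟩ := F.map_surjective (show F.obj A ⟶ F.obj D.as from f)
    obtain ⟨g, rfl⟩ := F.map_surjective (show F.obj B ⟶ F.obj D.as from g)
    obtain ⟨h, ⟨hA, hB⟩, -⟩ := hc f g
    exact ⟨F.map h, by rw [← F.map_comp, hA], by rw [← F.map_comp, hB]⟩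
  · intro D h h' hA hB
    obtain ⟨h, rfl⟩ := F.map_surjective (show F.obj P ⟶ F.obj D.as from h)
    obtain ⟨h', rfl⟩ := F.map_surjective (show F.obj P ⟶ F.obj D.as from h')
    simp only [← F.map_comp] at hA hB
    obtain ⟨U, ⟨hUA, hUB⟩, rfl⟩ := hc.exists_trivRel_phase
      ((Quotient.functor_map_eq_iff _ _ _).1 hA.symm)
      ((Quotient.functor_map_eq_iff _ _ _).1 hB.symm)
    refine ⟨F.map U, ⟨?_, ?_⟩, F.map_comp _ _⟩
    · rw [← F.map_comp]; exact CategoryTheory.Quotient.sound _ hUA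
    · rw [← F.map_comp]; exact CategoryTheory.Quotient.sound _ hUB

theorem stmt_7_general
    (hcop : ∀ A B : C, ∃ (P : C) (κA : A ⟶ P) (κB : B ⟶ P), IsCoproduct₂ A B P κA κB)
    (T : ∀ A : C, Subgroup (Aut A)) (hT : IsTrivialIsos T) :
    (∀ Z : C, IsInitial Z → Nonempty (IsInitial ((Quotient.functor (trivRel T)).obj Z))) ∧
    (∀ (A B P : C) (κA : A ⟶ P) (κB : B ⟶ P), IsCoproduct₂ A B P κA κB →
      IsPhasedCoproduct₂ ((Quotient.functor (trivRel T)).obj A)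
        ((Quotient.functor (trivRel T)).obj B) ((Quotient.functor (trivRel T)).obj P)
        ((Quotient.functor (trivRel T)).map κA) ((Quotient.functor (trivRel T)).map κB)) ∧
    HasPhasedCoproducts₂ (Quotient (trivRel T)) := by
  refine ⟨fun Z hZ => ⟨Quotient.isInitialFunctorObj _ hZ⟩,
    fun A B P κA κB hc => hc.isPhasedCoproduct₂_quotientFunctorMap hT, fun X Y => ?_⟩
  obtain ⟨P, κA, κB, hc⟩ := hcop X.as Y.as
  exact ⟨_, _, _, hc.isPhasedCoproduct₂_quotientFunctorMap hT⟩

/-- the quotient of a category with finite coproducts by a choice of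
trivial isomorphisms has finite phased coproducts; initial objects stay initial and
images of coproducts are phased coproducts. -/
theorem stmt_7 [HasInitial C]
    (hcop : ∀ A B : C, ∃ (P : C) (κA : A ⟶ P) (κB : B ⟶ P), IsCoproduct₂ A B P κA κB)
    (T : ∀ A : C, Subgroup (Aut A)) (hT : IsTrivialIsos T) :
    (∀ Z : C, IsInitial Z → Nonempty (IsInitial ((Quotient.functor (trivRel T)).obj Z))) ∧
    (∀ (A B P : C) (κA : A ⟶ P) (κB : B ⟶ P), IsCoproduct₂ A B P κA κB →
      IsPhasedCoproduct₂ ((Quotient.functor (trivRel T)).obj A)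
        ((Quotient.functor (trivRel T)).obj B) ((Quotient.functor (trivRel T)).obj P)
        ((Quotient.functor (trivRel T)).map κA) ((Quotient.functor (trivRel T)).map κB)) ∧
    HasPhasedCoproducts₂ (Quotient (trivRel T)) :=
  stmt_7_general hcop T hT
end

section
/- Let C be a monoidal category with distributive finite phased coproducts. Then the monoidal unit I is a phase generator: every ∇ : I +̇ I → I with ∇ ∘ κ₁ = id_I = ∇ ∘ κ₂ is phase monic, and every diagonal monomorphism m : I +̇ I → A +̇ B is phase epic. -/
open CategoryTheory CategoryTheory.Limits

universe v u

variable {C : Type u} [Category.{v} C]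

/-- All coprojections of binary phased coproducts are monic. -/
def MonicPhasedCoproducts (C : Type u) [Category.{v} C] : Prop :=
  ∀ {A B P : C} {κA : A ⟶ P} {κB : B ⟶ P},
    IsPhasedCoproduct₂ A B P κA κB → Mono κA ∧ Mono κB

/-- Transitive phases: every diagonal morphism intertwines phases with phases. -/
def PhasesTransitive (C : Type u) [Category.{v} C] : Prop :=
  ∀ {A B P : C} {κA : A ⟶ P} {κB : B ⟶ P} {A' B' P' : C} {κA' : A' ⟶ P'} {κB' : B' ⟶ P'},
    IsPhasedCoproduct₂ A B P κA κB → IsPhasedCoproduct₂ A' B' P' κA' κB' →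
    ∀ f : P ⟶ P', (∃ g, κA ≫ f = g ≫ κA') → (∃ h, κB ≫ f = h ≫ κB') →
    ∀ U : P ⟶ P, κA ≫ U = κA → κB ≫ U = κB →
    ∃ V : P' ⟶ P', (κA' ≫ V = κA' ∧ κB' ≫ V = κB') ∧ U ≫ f = f ≫ V

/-- Phase generator. -/
structure IsPhaseGenerator (Gen : C) : Prop where
  phaseMonic : ∀ {P : C} {κ₁ κ₂ : Gen ⟶ P}, IsPhasedCoproduct₂ Gen Gen P κ₁ κ₂ →
    ∀ d : P ⟶ Gen, κ₁ ≫ d = 𝟙 Gen → κ₂ ≫ d = 𝟙 Gen →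
    ∀ U V : P ⟶ P, (κ₁ ≫ U = κ₁ ∧ κ₂ ≫ U = κ₂) → (κ₁ ≫ V = κ₁ ∧ κ₂ ≫ V = κ₂) →
      U ≫ d = V ≫ d → U = V
  phaseEpic : ∀ {P : C} {κ₁ κ₂ : Gen ⟶ P}, IsPhasedCoproduct₂ Gen Gen P κ₁ κ₂ →
    ∀ {A B Q : C} {κA : A ⟶ Q} {κB : B ⟶ Q}, IsPhasedCoproduct₂ A B Q κA κB →
    ∀ m : P ⟶ Q, Mono m → (∃ g, κ₁ ≫ m = g ≫ κA) → (∃ h, κ₂ ≫ m = h ≫ κB) →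
    ∀ U V : Q ⟶ Q, (κA ≫ U = κA ∧ κB ≫ U = κB) → (κA ≫ V = κA ∧ κB ≫ V = κB) →
      m ≫ U = m ≫ V → U = V
open MonoidalCategory

section Monoidal

variable {C : Type u} [Category.{v} C] [MonoidalCategory C]

/-- Left action of a scalar on a morphism: `s·f`. -/
def lact (s : 𝟙_ C ⟶ 𝟙_ C) {A B : C} (f : A ⟶ B) : A ⟶ B :=
  (λ_ A).inv ≫ (s ⊗ₘ f) ≫ (λ_ B).hom

/-- Right action of a scalar on a morphism: `f·s`. -/
def ract (s : 𝟙_ C ⟶ 𝟙_ C) {A B : C} (f : A ⟶ B) : A ⟶ B :=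
  (ρ_ A).inv ≫ (f ⊗ₘ s) ≫ (ρ_ B).hom

/-- A scalar is central when its left and right actions agree on every morphism. -/
def Central (s : 𝟙_ C ⟶ 𝟙_ C) : Prop :=
  ∀ {A B : C} (f : A ⟶ B), lact s f = ract s f

/-- A choice of global phases: a set of invertible central scalars closed under
composition and inverses (in particular a group of scalars). -/
structure IsGlobalPhases (P : Set (𝟙_ C ⟶ 𝟙_ C)) : Prop where
  central : ∀ u ∈ P, Central u
  id_mem : 𝟙 (𝟙_ C) ∈ P
  comp_mem : ∀ u ∈ P, ∀ v ∈ P, u ≫ v ∈ P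
  inv_mem : ∀ u ∈ P, ∃ v ∈ P, u ≫ v = 𝟙 (𝟙_ C) ∧ v ≫ u = 𝟙 (𝟙_ C)

/-- The congruence induced by a choice of global phases: `f ∼ g` iff `f = u·g`. -/
def gpRel (P : Set (𝟙_ C ⟶ 𝟙_ C)) : HomRel C :=
  fun {_ _} f g => ∃ u ∈ P, f = lact u g

/-- Distributivity of binary phased coproducts in a monoidal category: the functors
`A ⊗ (−)` and `(−) ⊗ A` strongly preserve phased coproducts. -/
def DistribPhasedCoproducts (C : Type u) [Category.{v} C] [MonoidalCategory C] : Prop :=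
  ∀ (A : C) {B₁ B₂ P : C} {κ₁ : B₁ ⟶ P} {κ₂ : B₂ ⟶ P},
    IsPhasedCoproduct₂ B₁ B₂ P κ₁ κ₂ →
    (IsPhasedCoproduct₂ (A ⊗ B₁) (A ⊗ B₂) (A ⊗ P) (A ◁ κ₁) (A ◁ κ₂) ∧
      ∀ W : A ⊗ P ⟶ A ⊗ P, (A ◁ κ₁) ≫ W = A ◁ κ₁ → (A ◁ κ₂) ≫ W = A ◁ κ₂ →
        ∃ U : P ⟶ P, (κ₁ ≫ U = κ₁ ∧ κ₂ ≫ U = κ₂) ∧ W = A ◁ U) ∧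
    (IsPhasedCoproduct₂ (B₁ ⊗ A) (B₂ ⊗ A) (P ⊗ A) (κ₁ ▷ A) (κ₂ ▷ A) ∧
      ∀ W : P ⊗ A ⟶ P ⊗ A, (κ₁ ▷ A) ≫ W = κ₁ ▷ A → (κ₂ ▷ A) ≫ W = κ₂ ▷ A →
        ∃ U : P ⟶ P, (κ₁ ≫ U = κ₁ ∧ κ₂ ≫ U = κ₂) ∧ W = U ▷ A)

/-- Distributivity of binary (actual) coproducts in a monoidal category. -/
def DistribCoproducts (C : Type u) [Category.{v} C] [MonoidalCategory C] : Prop :=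
  ∀ (A : C) {B₁ B₂ P : C} {κ₁ : B₁ ⟶ P} {κ₂ : B₂ ⟶ P},
    IsCoproduct₂ B₁ B₂ P κ₁ κ₂ →
    IsCoproduct₂ (A ⊗ B₁) (A ⊗ B₂) (A ⊗ P) (A ◁ κ₁) (A ◁ κ₂) ∧
    IsCoproduct₂ (B₁ ⊗ A) (B₂ ⊗ A) (P ⊗ A) (κ₁ ▷ A) (κ₂ ▷ A)

/-- All coprojections of binary coproducts are monic. -/
def MonicCoproducts (C : Type u) [Category.{v} C] : Prop :=
  ∀ {A B P : C} {κA : A ⟶ P} {κB : B ⟶ P}, IsCoproduct₂ A B P κA κB → Mono κA ∧ Mono κB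

end Monoidal

/-!
Distributivity turns phases of `X ⊗ (𝟙 +̇ 𝟙)` into phases of `𝟙 +̇ 𝟙`, so phases can be
compared inside tensor products.

Phase monicity: the diagonal `Δ : 𝟙 +̇ 𝟙 → (𝟙 +̇ 𝟙) ⊗ (𝟙 +̇ 𝟙)`, `κᵢ ↦ κᵢ ⊗ κᵢ`, followed by
a codiagonal on either tensor factor is a phase, hence invertible. A phase `W` fixing a
codiagonal is therefore absorbed by `Δ` on the right factor, and reading this off on the
left factor gives `W = 𝟙`.

Phase epicness: a phase `Ω` of `A +̇ B` fixing a diagonal mono `m` is encoded as the map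
`L : (A +̇ B) ⊗ (𝟙 +̇ 𝟙) → A +̇ B` that is `Ω` on the first summand and `𝟙` on the second.
Restricted along `κA ▷ _`, `κB ▷ _` and `m ▷ _`, the map `L` becomes a codiagonal of
`𝟙 +̇ 𝟙` on the right factor; cancelling `m` shows that these three codiagonals coincide.
Distributivity on the left factor then writes `L` as a fixed map tensored with that one
codiagonal, and evaluating on the two summands gives `Ω = 𝟙`.
-/

namespace IsPhasedCoproduct₂

variable {A B P : C} {κA : A ⟶ P} {κB : B ⟶ P}

theorem isIso_of_phase (hP : IsPhasedCoproduct₂ A B P κA κB) {U : P ⟶ P}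
    (hA : κA ≫ U = κA) (hB : κB ≫ U = κB) : IsIso U := by
  obtain ⟨V, ⟨hVA, hVB⟩, hVU⟩ := hP.phase U (𝟙 P) (by simp [hA]) (by simp [hB])
  obtain ⟨W, -, hWV⟩ := hP.phase V (𝟙 P) (by simp [hVA]) (by simp [hVB])
  have hWU : W = U := by
    rw [← Category.comp_id W, hVU, ← Category.assoc, ← hWV, Category.id_comp]
  exact ⟨V, hWU ▸ hWV.symm, hVU.symm⟩

end IsPhasedCoproduct₂

section PhaseGenerator

variable [MonoidalCategory C]

theorem leftUnitor_inv_tensorHom_whiskerLeft_rightUnitor {P : C} {u : 𝟙_ C ⟶ P}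
    {s : P ⟶ 𝟙_ C} (hus : u ≫ s = 𝟙 _) :
    (λ_ (𝟙_ C)).inv ≫ (u ⊗ₘ u) ≫ (P ◁ s) ≫ (ρ_ P).hom = u := by
  rw [MonoidalCategory.tensorHom_def, Category.assoc, ← whiskerLeft_comp_assoc, hus,
    whiskerLeft_id, Category.id_comp, rightUnitor_naturality, unitors_inv_equal,
    Iso.inv_hom_id_assoc]

theorem leftUnitor_inv_tensorHom_whiskerRight_leftUnitor {P : C} {u : 𝟙_ C ⟶ P}
    {s : P ⟶ 𝟙_ C} (hus : u ≫ s = 𝟙 _) :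
    (λ_ (𝟙_ C)).inv ≫ (u ⊗ₘ u) ≫ (s ▷ P) ≫ (λ_ P).hom = u := by
  rw [MonoidalCategory.tensorHom_def', Category.assoc, ← comp_whiskerRight_assoc, hus,
    id_whiskerRight, Category.id_comp, leftUnitor_naturality, Iso.inv_hom_id_assoc]

theorem whiskerRight_whiskerLeft_rightUnitor_of_unit {X P D : C} (x : 𝟙_ C ⟶ X)
    (s : P ⟶ 𝟙_ C) (g : X ⟶ D) :
    (x ▷ P) ≫ (X ◁ s) ≫ (ρ_ X).hom ≫ g = (λ_ P).hom ≫ s ≫ x ≫ g := by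
  simp [← whisker_exchange_assoc, unitors_inv_equal]

theorem whiskerRight_whiskerLeft_rightUnitor {X Q P : C} (f : X ⟶ Q) (s : P ⟶ 𝟙_ C) :
    (f ▷ P) ≫ (Q ◁ s) ≫ (ρ_ Q).hom = (X ◁ s) ≫ (ρ_ X).hom ≫ f := by
  simp [← whisker_exchange_assoc]

theorem rightUnitor_inv_whiskerLeft_whiskerRight {Q Q' P : C} (Y : Q ⟶ Q')
    {u : 𝟙_ C ⟶ P} {s : P ⟶ 𝟙_ C} (hus : u ≫ s = 𝟙 _) :
    (ρ_ Q).inv ≫ (Q ◁ u) ≫ (Y ▷ P) ≫ (Q' ◁ s) ≫ (ρ_ Q').hom = Y := by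
  simp [whisker_exchange_assoc, ← whiskerLeft_comp_assoc, hus]

theorem eq_of_whiskerRight_comp_eq {X Q P : C} {f : X ⟶ Q} {m : P ⟶ Q} [Mono m]
    {x : 𝟙_ C ⟶ X} {u : 𝟙_ C ⟶ P} (hu : u ≫ m = x ≫ f) {k : Q ⊗ P ⟶ Q}
    {s t : P ⟶ 𝟙_ C} (hut : u ≫ t = 𝟙 _)
    (hs : (f ▷ P) ≫ k = (X ◁ s) ≫ (ρ_ X).hom ≫ f)
    (ht : (m ▷ P) ≫ k = (P ◁ t) ≫ (ρ_ P).hom ≫ m) : s = t := by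
  have h : (λ_ P).hom ≫ s ≫ u ≫ m = (λ_ P).hom ≫ t ≫ u ≫ m := by
    calc (λ_ P).hom ≫ s ≫ u ≫ m = (x ▷ P) ≫ (f ▷ P) ≫ k := by
          rw [hs, whiskerRight_whiskerLeft_rightUnitor_of_unit, hu]
      _ = (u ▷ P) ≫ (m ▷ P) ≫ k := by
          rw [← comp_whiskerRight_assoc, ← hu, comp_whiskerRight_assoc]
      _ = (λ_ P).hom ≫ t ≫ u ≫ m := by rw [ht, whiskerRight_whiskerLeft_rightUnitor_of_unit]
  have hsu : s ≫ u = t ≫ u := (cancel_mono m).1 (by simpa using h)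
  simpa [hut] using congrArg (· ≫ t) hsu

namespace IsPhasedCoproduct₂

variable {P : C} {κ₁ κ₂ : 𝟙_ C ⟶ P}

theorem phase_eq_id_of_comp_eq (hP : IsPhasedCoproduct₂ (𝟙_ C) (𝟙_ C) P κ₁ κ₂)
    {e : P ⟶ 𝟙_ C} (he₁ : κ₁ ≫ e = 𝟙 _) (he₂ : κ₂ ≫ e = 𝟙 _) {W : P ⟶ P}
    (hW₁ : κ₁ ≫ W = κ₁) (hW₂ : κ₂ ≫ W = κ₂) (hWe : W ≫ e = e) : W = 𝟙 P := by
  obtain ⟨Δ, hΔ₁, hΔ₂⟩ := hP.lift ((λ_ _).inv ≫ (κ₁ ⊗ₘ κ₁)) ((λ_ _).inv ≫ (κ₂ ⊗ₘ κ₂))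
  have hΔW : Δ ≫ (P ◁ W) = Δ := by
    obtain ⟨Ξ, -, hΞ⟩ := hP.phase Δ (Δ ≫ (P ◁ W))
      (by rw [reassoc_of% hΔ₁, hΔ₁, MonoidalCategory.tensorHom_def, Category.assoc,
        ← whiskerLeft_comp, hW₁])
      (by rw [reassoc_of% hΔ₂, hΔ₂, MonoidalCategory.tensorHom_def, Category.assoc,
        ← whiskerLeft_comp, hW₂])
    have := hP.isIso_of_phase (U := Δ ≫ (P ◁ e) ≫ (ρ_ P).hom)
      (by rw [reassoc_of% hΔ₁, leftUnitor_inv_tensorHom_whiskerLeft_rightUnitor he₁])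
      (by rw [reassoc_of% hΔ₂, leftUnitor_inv_tensorHom_whiskerLeft_rightUnitor he₂])
    have hΞ_id : Ξ = 𝟙 P := (cancel_mono (Δ ≫ (P ◁ e) ≫ (ρ_ P).hom)).1 <| by
      rw [Category.id_comp, ← Category.assoc, ← hΞ, Category.assoc, ← whiskerLeft_comp_assoc,
        hWe]
    rw [hΞ, hΞ_id, Category.id_comp]
  have := hP.isIso_of_phase (U := Δ ≫ (e ▷ P) ≫ (λ_ P).hom)
    (by rw [reassoc_of% hΔ₁, leftUnitor_inv_tensorHom_whiskerRight_leftUnitor he₁])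
    (by rw [reassoc_of% hΔ₂, leftUnitor_inv_tensorHom_whiskerRight_leftUnitor he₂])
  refine (cancel_epi (Δ ≫ (e ▷ P) ≫ (λ_ P).hom)).1 ?_
  rw [Category.comp_id, Category.assoc, Category.assoc, ← leftUnitor_naturality,
    ← whisker_exchange_assoc, ← Category.assoc Δ, hΔW]

end IsPhasedCoproduct₂

namespace DistribPhasedCoproducts

variable {B₁ B₂ P : C} {κ₁ : B₁ ⟶ P} {κ₂ : B₂ ⟶ P}

theorem exists_whiskerLeft_phase (hdist : DistribPhasedCoproducts C)
    (hP : IsPhasedCoproduct₂ B₁ B₂ P κ₁ κ₂) (X : C) {D : C} (k k' : X ⊗ P ⟶ D)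
    (h₁ : (X ◁ κ₁) ≫ k = (X ◁ κ₁) ≫ k') (h₂ : (X ◁ κ₂) ≫ k = (X ◁ κ₂) ≫ k') :
    ∃ U : P ⟶ P, (κ₁ ≫ U = κ₁ ∧ κ₂ ≫ U = κ₂) ∧ k' = (X ◁ U) ≫ k := by
  obtain ⟨⟨hXP, hphase⟩, -⟩ := hdist X hP
  obtain ⟨W, ⟨hW₁, hW₂⟩, hW⟩ := hXP.phase k k' h₁ h₂
  obtain ⟨U, hU, rfl⟩ := hphase W hW₁ hW₂
  exact ⟨U, hU, hW⟩

theorem exists_whiskerRight_phase (hdist : DistribPhasedCoproducts C)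
    (hP : IsPhasedCoproduct₂ B₁ B₂ P κ₁ κ₂) (X : C) {D : C} (k k' : P ⊗ X ⟶ D)
    (h₁ : (κ₁ ▷ X) ≫ k = (κ₁ ▷ X) ≫ k') (h₂ : (κ₂ ▷ X) ≫ k = (κ₂ ▷ X) ≫ k') :
    ∃ U : P ⟶ P, (κ₁ ≫ U = κ₁ ∧ κ₂ ≫ U = κ₂) ∧ k' = (U ▷ X) ≫ k := by
  obtain ⟨-, hPX, hphase⟩ := hdist X hP
  obtain ⟨W, ⟨hW₁, hW₂⟩, hW⟩ := hPX.phase k k' h₁ h₂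
  obtain ⟨U, hU, rfl⟩ := hphase W hW₁ hW₂
  exact ⟨U, hU, hW⟩

theorem exists_codiagonal_factor (hdist : DistribPhasedCoproducts C) {P : C}
    {κ₁ κ₂ : 𝟙_ C ⟶ P} (hP : IsPhasedCoproduct₂ (𝟙_ C) (𝟙_ C) P κ₁ κ₂) {d : P ⟶ 𝟙_ C}
    (hd₁ : κ₁ ≫ d = 𝟙 _) (hd₂ : κ₂ ≫ d = 𝟙 _) {X D : C} {k : X ⊗ P ⟶ D} {t : X ⟶ D}
    (h₁ : (X ◁ κ₁) ≫ k = (ρ_ X).hom ≫ t) (h₂ : (X ◁ κ₂) ≫ k = (ρ_ X).hom ≫ t) :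
    ∃ s : P ⟶ 𝟙_ C, (κ₁ ≫ s = 𝟙 _ ∧ κ₂ ≫ s = 𝟙 _) ∧ k = (X ◁ s) ≫ (ρ_ X).hom ≫ t := by
  obtain ⟨U, ⟨hU₁, hU₂⟩, hU⟩ :=
    hdist.exists_whiskerLeft_phase hP X ((X ◁ d) ≫ (ρ_ X).hom ≫ t) k
    (by rw [← whiskerLeft_comp_assoc, hd₁, whiskerLeft_id, Category.id_comp, h₁])
    (by rw [← whiskerLeft_comp_assoc, hd₂, whiskerLeft_id, Category.id_comp, h₂])
  refine ⟨U ≫ d, ⟨by rw [reassoc_of% hU₁, hd₁], by rw [reassoc_of% hU₂, hd₂]⟩, ?_⟩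
  rw [hU, whiskerLeft_comp_assoc]

theorem phase_eq_id_of_mono_comp_eq (hdist : DistribPhasedCoproducts C) {P : C}
    {κ₁ κ₂ : 𝟙_ C ⟶ P} (hP : IsPhasedCoproduct₂ (𝟙_ C) (𝟙_ C) P κ₁ κ₂)
    {A B Q : C} {κA : A ⟶ Q} {κB : B ⟶ Q} (hQ : IsPhasedCoproduct₂ A B Q κA κB)
    {m : P ⟶ Q} [Mono m] {g : 𝟙_ C ⟶ A} (hg : κ₁ ≫ m = g ≫ κA)
    {h : 𝟙_ C ⟶ B} (hh : κ₂ ≫ m = h ≫ κB) {Ω : Q ⟶ Q} (hΩA : κA ≫ Ω = κA)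
    (hΩB : κB ≫ Ω = κB) (hmΩ : m ≫ Ω = m) : Ω = 𝟙 Q := by
  obtain ⟨d, hd₁, hd₂⟩ := hP.lift (𝟙 _) (𝟙 _)
  obtain ⟨L, hL₁, hL₂⟩ := (hdist Q hP).1.1.lift ((ρ_ Q).hom ≫ Ω) (ρ_ Q).hom
  have factor {X : C} (f : X ⟶ Q) (hf : f ≫ Ω = f) : ∃ s : P ⟶ 𝟙_ C,
      (κ₁ ≫ s = 𝟙 _ ∧ κ₂ ≫ s = 𝟙 _) ∧ (f ▷ P) ≫ L = (X ◁ s) ≫ (ρ_ X).hom ≫ f :=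
    hdist.exists_codiagonal_factor hP hd₁ hd₂
      (by rw [whisker_exchange_assoc, hL₁, rightUnitor_naturality_assoc, hf])
      (by rw [whisker_exchange_assoc, hL₂, rightUnitor_naturality])
  obtain ⟨sA, -, hsA⟩ := factor κA hΩA
  obtain ⟨sB, -, hsB⟩ := factor κB hΩB
  obtain ⟨s, ⟨hs₁, hs₂⟩, hs⟩ := factor m hmΩ
  have hsA_eq : sA = s := eq_of_whiskerRight_comp_eq hg hs₁ hsA hs
  have hsB_eq : sB = s := eq_of_whiskerRight_comp_eq hh hs₂ hsB hs
  obtain ⟨Y, -, hY⟩ := hdist.exists_whiskerRight_phase hQ P ((Q ◁ s) ≫ (ρ_ Q).hom) L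
    (by rw [whiskerRight_whiskerLeft_rightUnitor, hsA, hsA_eq])
    (by rw [whiskerRight_whiskerLeft_rightUnitor, hsB, hsB_eq])
  have eval {u : 𝟙_ C ⟶ P} (hu : u ≫ s = 𝟙 _) : (ρ_ Q).inv ≫ (Q ◁ u) ≫ L = Y := by
    rw [hY]
    exact rightUnitor_inv_whiskerLeft_whiskerRight Y hu
  calc Ω = (ρ_ Q).inv ≫ (Q ◁ κ₁) ≫ L := by rw [hL₁, Iso.inv_hom_id_assoc]
    _ = (ρ_ Q).inv ≫ (Q ◁ κ₂) ≫ L := by rw [eval hs₁, eval hs₂]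
    _ = 𝟙 Q := by rw [hL₂, Iso.inv_hom_id]

end DistribPhasedCoproducts

end PhaseGenerator

theorem stmt_12_general [MonoidalCategory C]
    (hdist : DistribPhasedCoproducts C) :
    IsPhaseGenerator (𝟙_ C) := by
  refine ⟨fun hP d hd₁ hd₂ U V hU hV hUV => ?_,
    fun hP _ _ _ _ _ hQ m _ hg hh U V hU hV hUV => ?_⟩
  · obtain ⟨W, ⟨hW₁, hW₂⟩, rfl⟩ := hP.phase V U (by rw [hU.1, hV.1]) (by rw [hU.2, hV.2])
    rw [hP.phase_eq_id_of_comp_eq (e := V ≫ d) (by rw [reassoc_of% hV.1, hd₁])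
      (by rw [reassoc_of% hV.2, hd₂]) hW₁ hW₂ (by rw [← Category.assoc, hUV]),
      Category.id_comp]
  · obtain ⟨W, ⟨hW₁, hW₂⟩, rfl⟩ := hQ.phase V U (by rw [hU.1, hV.1]) (by rw [hU.2, hV.2])
    have := hQ.isIso_of_phase hV.1 hV.2
    obtain ⟨g, hg⟩ := hg
    obtain ⟨h, hh⟩ := hh
    rw [hdist.phase_eq_id_of_mono_comp_eq hP hQ hg hh hW₁ hW₂
      ((cancel_mono V).1 (by rw [Category.assoc, hUV])), Category.id_comp]

/-- in a monoidal category with distributive finite phased coproducts,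
the monoidal unit `𝟙_ C` is a phase generator. -/
theorem stmt_12 [MonoidalCategory C]
    (hcop : HasPhasedCoproducts₂ C) (hinit : ∃ Z : C, IsPhasedInitial Z)
    (hdist : DistribPhasedCoproducts C) :
    IsPhaseGenerator (𝟙_ C) :=
  stmt_12_general hdist
end

section
/- Let C be a monoidal category with distributive finite coproducts all of whose coprojections are monic. Then a scalar s : I → I is central if and only if for every object A there exists a scalar t : I → I with s·id_A = id_A·t. -/
open CategoryTheory CategoryTheory.Limits

universe v u

variable {C : Type u} [Category.{v} C]

open MonoidalCategory

/- Both actions of a scalar are natural, so an equation `s·id_P = id_P·t` restricts along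
any monomorphism into `P`. Taking `P = X + I`, restricting to `I` forces `t = s`, and
restricting to `X` gives `s·id_X = id_X·s`; by naturality this is centrality. -/
section ScalarAction

variable {C : Type u} [Category.{v} C] [MonoidalCategory C]

lemma lact_eq_lact_id_comp (s : 𝟙_ C ⟶ 𝟙_ C) {A B : C} (f : A ⟶ B) :
    lact s f = lact s (𝟙 A) ≫ f := by
  simp [lact, MonoidalCategory.tensorHom_def]

lemma lact_eq_comp_lact_id (s : 𝟙_ C ⟶ 𝟙_ C) {A B : C} (f : A ⟶ B) :
    lact s f = f ≫ lact s (𝟙 B) := by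
  simp [lact, tensorHom_def']

lemma ract_eq_ract_id_comp (s : 𝟙_ C ⟶ 𝟙_ C) {A B : C} (f : A ⟶ B) :
    ract s f = ract s (𝟙 A) ≫ f := by
  simp [ract, tensorHom_def']

lemma ract_eq_comp_ract_id (s : 𝟙_ C ⟶ 𝟙_ C) {A B : C} (f : A ⟶ B) :
    ract s f = f ≫ ract s (𝟙 B) := by
  simp [ract, MonoidalCategory.tensorHom_def]

@[simp]
lemma lact_id_unit (s : 𝟙_ C ⟶ 𝟙_ C) : lact s (𝟙 (𝟙_ C)) = s := by
  rw [lact, unitors_inv_equal, unitors_equal]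
  simp [MonoidalCategory.tensorHom_def]

@[simp]
lemma ract_id_unit (s : 𝟙_ C ⟶ 𝟙_ C) : ract s (𝟙 (𝟙_ C)) = s := by
  rw [ract, ← unitors_inv_equal, ← unitors_equal]
  simp [tensorHom_def']

lemma central_iff_lact_id_eq_ract_id (s : 𝟙_ C ⟶ 𝟙_ C) :
    Central s ↔ ∀ X : C, lact s (𝟙 X) = ract s (𝟙 X) := by
  refine ⟨fun hs X => hs (𝟙 X), fun h A B f => ?_⟩
  rw [lact_eq_comp_lact_id, h B, ← ract_eq_comp_ract_id]

lemma lact_id_eq_ract_id_of_mono {s t : 𝟙_ C ⟶ 𝟙_ C} {X P : C} (κ : X ⟶ P) [Mono κ]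
    (h : lact s (𝟙 P) = ract t (𝟙 P)) : lact s (𝟙 X) = ract t (𝟙 X) := by
  rw [← cancel_mono κ, ← lact_eq_lact_id_comp, ← ract_eq_ract_id_comp,
    lact_eq_comp_lact_id, ract_eq_comp_ract_id, h]

lemma eq_of_lact_id_eq_ract_id_of_mono {s t : 𝟙_ C ⟶ 𝟙_ C} {P : C} (κ : 𝟙_ C ⟶ P) [Mono κ]
    (h : lact s (𝟙 P) = ract t (𝟙 P)) : s = t := by
  simpa using lact_id_eq_ract_id_of_mono κ h

end ScalarAction

theorem stmt_13_general [MonoidalCategory C]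
    (hcop : ∀ A B : C, ∃ (P : C) (κA : A ⟶ P) (κB : B ⟶ P), IsCoproduct₂ A B P κA κB)
    (hmono : MonicCoproducts C)
    (s : 𝟙_ C ⟶ 𝟙_ C) :
    Central s ↔ ∀ A : C, ∃ t : 𝟙_ C ⟶ 𝟙_ C, lact s (𝟙 A) = ract t (𝟙 A) := by
  refine ⟨fun hs A => ⟨s, hs (𝟙 A)⟩, fun h => (central_iff_lact_id_eq_ract_id s).2 fun X => ?_⟩
  obtain ⟨P, κX, κI, hP⟩ := hcop X (𝟙_ C)
  obtain ⟨_, _⟩ := hmono hP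
  obtain ⟨t, ht⟩ := h P
  obtain rfl : s = t := eq_of_lact_id_eq_ract_id_of_mono κI ht
  exact lact_id_eq_ract_id_of_mono κX ht

/-- in a monoidal category with distributive finite monic coproducts,
a scalar `s` is central iff for every object `A` there is a scalar `t` with
`s·id_A = id_A·t`. -/
theorem stmt_13 [MonoidalCategory C] [HasInitial C]
    (hcop : ∀ A B : C, ∃ (P : C) (κA : A ⟶ P) (κB : B ⟶ P), IsCoproduct₂ A B P κA κB)
    (hmono : MonicCoproducts C) (hdist : DistribCoproducts C)
    (s : 𝟙_ C ⟶ 𝟙_ C) :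
    Central s ↔ ∀ A : C, ∃ t : 𝟙_ C ⟶ 𝟙_ C, lact s (𝟙 A) = ract t (𝟙 A) :=
  stmt_13_general hcop hmono s
end
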